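/- arXiv:2108.04870 — 4 statements merged into one kernel-verified Lean document; each statement's English description precedes it below -/
import Mathlib

section
/- Let p be an odd prime and let a : (ℤ/pℤ)² → ℤ be any assignment of integers to the elements of the group G = (ℤ/pℤ)². If p divides the group determinant D_G((a_g)), then p^(p+3) divides D_G((a_g)). -/
/-!
Over `R = 𝓞 ℚ(ζ_p)` the characters `w ↦ ζ ^ (w ⬝ᵥ g)` of `G = (ℤ/pℤ)ⁿ` diagonalise the group
matrix, so `D = ∏_w F w` with `F w = ∑_g a_g ζ ^ (w ⬝ᵥ g)`. Put `π = ζ - 1`, so `π ^ (p - 1) ~ p`.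
Since `ζ ^ k ≡ 1 + k π [mod π²]`, we get `F w ≡ S + N w * π [mod π²]` with `S = ∑_g a_g` and
`N w ≡ w ⬝ᵥ m [mod p]`, where `m = ∑_g a_g • g`. If `p ∣ D`, then `π` divides some `F w`, hence
`π ∣ S`, hence `p ∣ S`. Then `π ^ (p - 1) ∣ F 0 = S`, `π ∣ F w` for all `w`, and, as `π² ∣ p` for
odd `p`, `π² ∣ F w` on the hyperplane `w ⬝ᵥ m = 0`, which has at least `p ^ (n - 1)` points.
Adding up the exponents gives `π ^ (p ^ n + p ^ (n - 1) + p - 3) ∣ D`. For `n = 2` this exponent is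
`(p - 1) (p + 3)`, and taking norms brings `p ^ (p + 3) ∣ D` back down to `ℤ`.
-/

open Finset Matrix
open scoped NumberField

def addGroupDet {G : Type*} [AddGroup G] [Fintype G] [DecidableEq G] (a : G → ℤ) : ℤ :=
  Matrix.det (Matrix.of fun g h : G => a (g - h))

lemma AddChar.map_sum_eq_prod {ι A M : Type*} [AddCommMonoid A] [CommMonoid M]
    (ψ : AddChar A M) (s : Finset ι) (f : ι → A) : ψ (∑ i ∈ s, f i) = ∏ i ∈ s, ψ (f i) := by
  induction s using Finset.cons_induction with
  | empty => simp
  | cons i s hi ih => rw [sum_cons, prod_cons, map_add_eq_mul, ih]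

lemma sq_sub_one_dvd_pow_sub_one_sub_mul {R : Type*} [CommRing R] (x : R) (k : ℕ) :
    (x - 1) ^ 2 ∣ x ^ k - 1 - k * (x - 1) := by
  induction k with
  | zero => simp
  | succ k ih =>
    have h : x ^ (k + 1) - 1 - (k + 1 : ℕ) * (x - 1) =
        x * (x ^ k - 1 - k * (x - 1)) + k * (x - 1) ^ 2 := by
      push_cast
      ring
    rw [h]
    exact dvd_add (ih.mul_left x) (dvd_mul_left _ _)

lemma dvd_of_algebraMap_dvd {R S : Type*} [CommRing R] [IsDomain R] [IsIntegrallyClosed R]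
    [CommRing S] [Nontrivial S] [Algebra R S] [Module.Free R S] [Module.Finite R S] {x y : R}
    (h : algebraMap R S x ∣ algebraMap R S y) : x ∣ y := by
  have hnorm := map_dvd (Algebra.norm R) h
  rw [Algebra.norm_algebraMap, Algebra.norm_algebraMap] at hnorm
  exact (IsIntegrallyClosed.pow_dvd_pow_iff Module.finrank_pos.ne').mp hnorm

lemma pow_le_card_filter_dotProduct_eq_zero {p n : ℕ} [NeZero p] (v : Fin (n + 1) → ZMod p) :
    p ^ n ≤ #{w | w ⬝ᵥ v = 0} := by
  let f : (Fin (n + 1) → ZMod p) →+ ZMod p :=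
    AddMonoidHom.mk' (· ⬝ᵥ v) fun x y => add_dotProduct x y v
  have hcard : Nat.card f.ker * f.ker.index = p ^ (n + 1) := by
    rw [AddSubgroup.card_mul_index, Nat.card_eq_fintype_card, Fintype.card_fun, ZMod.card,
      Fintype.card_fin]
  have hindex : f.ker.index ≤ p := by
    rw [AddSubgroup.index_ker]
    exact (Nat.card_le_card_of_injective _ Subtype.coe_injective).trans (Nat.card_zmod p).le
  have hker : Nat.card f.ker = #{w | w ⬝ᵥ v = 0} := by
    rw [← Nat.card_eq_finsetCard]
    exact Nat.card_congr (Equiv.subtypeEquivRight fun w => by simp [f])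
  have : p * p ^ n ≤ p * #{w | w ⬝ᵥ v = 0} := by
    rw [← pow_succ', ← hcard, ← hker, mul_comm p]
    exact Nat.mul_le_mul_left _ hindex
  exact Nat.le_of_mul_le_mul_left this (NeZero.pos p)

section Fourier

variable {R : Type*} [CommRing R] {p : ℕ} [NeZero p]

def fourierSum {n : ℕ} (ψ : AddChar (ZMod p) R) (a : (Fin n → ZMod p) → ℤ)
    (w : Fin n → ZMod p) : R :=
  ∑ g, (a g : R) * ψ (w ⬝ᵥ g)

def fourierMatrix (ψ : AddChar (ZMod p) R) (n : ℕ) :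
    Matrix (Fin n → ZMod p) (Fin n → ZMod p) R :=
  of fun g w => ψ (-(w ⬝ᵥ g))

variable {n : ℕ}

lemma groupMatrix_mul_fourierMatrix (ψ : AddChar (ZMod p) R) (a : (Fin n → ZMod p) → ℤ) :
    of (fun g h => (a (g - h) : R)) * fourierMatrix ψ n =
      fourierMatrix ψ n * diagonal (fourierSum ψ a) := by
  ext g w
  rw [mul_diagonal, mul_apply, fourierMatrix, of_apply, fourierSum, mul_sum]
  refine Fintype.sum_equiv (Equiv.subLeft g) _ _ fun h => ?_
  rw [of_apply, of_apply, Equiv.subLeft_apply, mul_left_comm, ← AddChar.map_add_eq_mul,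
    dotProduct_sub]
  congr 2
  ring

variable [IsDomain R] {ψ : AddChar (ZMod p) R}

lemma AddChar.sum_dotProduct (hψ : ψ.IsPrimitive) (c : Fin n → ZMod p) :
    ∑ w : Fin n → ZMod p, ψ (w ⬝ᵥ c) = if c = 0 then (p : R) ^ n else 0 := by
  classical
  calc ∑ w : Fin n → ZMod p, ψ (w ⬝ᵥ c)
      = ∏ i, ∑ x : ZMod p, ψ (x * c i) := by
        simp only [dotProduct, ψ.map_sum_eq_prod, Fintype.prod_sum]
    _ = ∏ i, if c i = 0 then (p : R) else 0 := by
        simp only [AddChar.sum_mulShift _ hψ, ZMod.card]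
        push_cast
        rfl
    _ = if c = 0 then (p : R) ^ n else 0 := by
        simp [Finset.prod_ite_zero, funext_iff]

lemma det_fourierMatrix_ne_zero (hψ : ψ.IsPrimitive) (hp : (p : R) ≠ 0) :
    (fourierMatrix ψ n).det ≠ 0 := by
  classical
  have hinv : fourierMatrix ψ n * of (fun w g => ψ (w ⬝ᵥ g)) = ((p : R) ^ n) • 1 := by
    ext g g'
    simp only [fourierMatrix, mul_apply, of_apply, ← AddChar.map_add_eq_mul, neg_add_eq_sub,
      ← dotProduct_sub, AddChar.sum_dotProduct hψ, sub_eq_zero, Matrix.smul_apply, one_apply,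
      smul_eq_mul, mul_ite, mul_one, mul_zero, eq_comm]
  intro h0
  have := congrArg det hinv
  rw [det_mul, h0, zero_mul, det_smul, det_one, mul_one] at this
  exact pow_ne_zero _ (pow_ne_zero _ hp) this.symm

theorem addGroupDet_eq_prod_fourierSum (hψ : ψ.IsPrimitive) (hp : (p : R) ≠ 0)
    (a : (Fin n → ZMod p) → ℤ) :
    (addGroupDet a : R) = ∏ w, fourierSum ψ a w := by
  have hdet := congrArg det (groupMatrix_mul_fourierMatrix ψ a)
  rw [det_mul, det_mul, det_diagonal, mul_comm] at hdet
  rw [← mul_left_cancel₀ (det_fourierMatrix_ne_zero hψ hp) hdet, addGroupDet, Int.cast_det]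
  rfl

theorem addGroupDet_eq_prod_fourierSum_zmodChar [CharZero R] {ζ : R} (hζ : IsPrimitiveRoot ζ p)
    (a : (Fin n → ZMod p) → ℤ) :
    (addGroupDet a : R) = ∏ w, fourierSum (AddChar.zmodChar p hζ.pow_eq_one) a w :=
  addGroupDet_eq_prod_fourierSum (AddChar.zmodChar_primitive_of_primitive_root p hζ)
    (Nat.cast_ne_zero.mpr (NeZero.ne p)) a

end Fourier

section Congruences

variable {R : Type*} [CommRing R] {p n : ℕ} [NeZero p]

def firstMoment (a : (Fin n → ZMod p) → ℤ) : Fin n → ZMod p :=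
  ∑ g, (a g : ZMod p) • g

lemma sq_sub_one_dvd_fourierSum_sub {ζ : R} (hζ : ζ ^ p = 1) (a : (Fin n → ZMod p) → ℤ)
    (w : Fin n → ZMod p) :
    (ζ - 1) ^ 2 ∣ fourierSum (AddChar.zmodChar p hζ) a w - ((∑ g, a g : ℤ) : R) -
      ((∑ g, a g * (w ⬝ᵥ g).val : ℤ) : R) * (ζ - 1) := by
  have h : fourierSum (AddChar.zmodChar p hζ) a w - ((∑ g, a g : ℤ) : R) -
      ((∑ g, a g * (w ⬝ᵥ g).val : ℤ) : R) * (ζ - 1) =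
      ∑ g, (a g : R) * (ζ ^ (w ⬝ᵥ g).val - 1 - (w ⬝ᵥ g).val * (ζ - 1)) := by
    simp only [fourierSum, AddChar.zmodChar_apply, Int.cast_sum, Int.cast_mul, Int.cast_natCast,
      sum_mul, ← sum_sub_distrib]
    exact sum_congr rfl fun g _ => by ring
  rw [h]
  exact dvd_sum fun g _ => (sq_sub_one_dvd_pow_sub_one_sub_mul ζ _).mul_left _

lemma sub_one_dvd_fourierSum_sub {ζ : R} (hζ : ζ ^ p = 1) (a : (Fin n → ZMod p) → ℤ)
    (w : Fin n → ZMod p) :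
    ζ - 1 ∣ fourierSum (AddChar.zmodChar p hζ) a w - ((∑ g, a g : ℤ) : R) := by
  have h := (dvd_pow_self _ two_ne_zero).trans (sq_sub_one_dvd_fourierSum_sub hζ a w)
  exact (dvd_sub_left (dvd_mul_left _ _)).mp h

lemma intCast_sum_mul_val_dotProduct (a : (Fin n → ZMod p) → ℤ) (w : Fin n → ZMod p) :
    ((∑ g, a g * (w ⬝ᵥ g).val : ℤ) : ZMod p) = w ⬝ᵥ firstMoment a := by
  simp [firstMoment, dotProduct_sum, dotProduct_smul]

end Congruences

section Cyclotomic

open IsCyclotomicExtension.Rat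

variable {p n : ℕ} [hp : Fact p.Prime] {K : Type*} [Field K] [NumberField K]
  [IsCyclotomicExtension {p} ℚ K] {ζ : K}

lemma dvd_sum_of_dvd_addGroupDet (hζ : IsPrimitiveRoot ζ p) {a : (Fin n → ZMod p) → ℤ}
    (h : (p : ℤ) ∣ addGroupDet a) :
    (p : ℤ) ∣ ∑ g, a g := by
  rw [← zeta_sub_one_dvd_intCast_iff' p hζ]
  have hD : hζ.toInteger - 1 ∣ (addGroupDet a : 𝓞 K) :=
    (zeta_sub_one_dvd_intCast_iff' p hζ).mpr h
  rw [addGroupDet_eq_prod_fourierSum_zmodChar hζ.toInteger_isPrimitiveRoot] at hD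
  obtain ⟨w, -, hw⟩ := hζ.zeta_sub_one_prime'.exists_mem_finset_dvd hD
  simpa using (dvd_sub_right hw).mp (sub_one_dvd_fourierSum_sub _ a w)

/-- The exponent is `p - 1` at `w = 0`, `2` on the rest of the hyperplane
`w ⬝ᵥ firstMoment a = 0`, and `1` elsewhere. -/
lemma zeta_sub_one_pow_dvd_fourierSum (hζ : IsPrimitiveRoot ζ p) (hp2 : p ≠ 2)
    {a : (Fin n → ZMod p) → ℤ} (hS : (p : ℤ) ∣ ∑ g, a g) (w : Fin n → ZMod p) :
    (hζ.toInteger - 1) ^ (1 + (if w ⬝ᵥ firstMoment a = 0 then 1 else 0) +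
      (if w = 0 then p - 3 else 0)) ∣
      fourierSum (AddChar.zmodChar p hζ.toInteger_isPrimitiveRoot.pow_eq_one) a w := by
  have hp3 : 3 ≤ p := hp.out.two_le.lt_of_ne' hp2
  set π := hζ.toInteger - 1
  set ψ := AddChar.zmodChar p hζ.toInteger_isPrimitiveRoot.pow_eq_one
  set S : 𝓞 K := ((∑ g, a g : ℤ) : 𝓞 K)
  have hpS : π ^ (p - 1) ∣ S :=
    (associated_zeta_sub_one_pow_prime p hζ).dvd.trans (by exact_mod_cast Int.cast_dvd_cast _ _ hS)
  by_cases hw0 : w = 0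
  · subst hw0
    have : 1 + 1 + (p - 3) = p - 1 := by omega
    simpa [fourierSum, this, S] using hpS
  rw [if_neg hw0, add_zero]
  set N : ℤ := ∑ g, a g * (w ⬝ᵥ g).val
  have h2 : π ^ 2 ∣ fourierSum ψ a w - S - N * π :=
    sq_sub_one_dvd_fourierSum_sub hζ.toInteger_isPrimitiveRoot.pow_eq_one a w
  have hF : fourierSum ψ a w = (fourierSum ψ a w - S - N * π) + S + N * π := by ring
  rw [hF]
  split_ifs with hw
  · have hN : π ∣ (N : 𝓞 K) := by
      rw [zeta_sub_one_dvd_intCast_iff' p hζ, ← ZMod.intCast_zmod_eq_zero_iff_dvd,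
        intCast_sum_mul_val_dotProduct, hw]
    exact dvd_add (dvd_add h2 ((pow_dvd_pow _ (by omega)).trans hpS))
      (pow_two π ▸ mul_dvd_mul_right hN π)
  · rw [add_zero, pow_one]
    exact dvd_add (dvd_add ((dvd_pow_self _ two_ne_zero).trans h2)
      ((dvd_pow_self _ (by omega)).trans hpS)) (dvd_mul_left _ _)

theorem zeta_sub_one_pow_dvd_addGroupDet (hζ : IsPrimitiveRoot ζ p) (hp2 : p ≠ 2)
    {a : (Fin (n + 1) → ZMod p) → ℤ} (h : (p : ℤ) ∣ addGroupDet a) :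
    (hζ.toInteger - 1) ^ (p ^ (n + 1) + p ^ n + (p - 3)) ∣ (addGroupDet a : 𝓞 K) := by
  have hprod := prod_dvd_prod_of_dvd (s := univ) _ _ fun w _ =>
    zeta_sub_one_pow_dvd_fourierSum hζ hp2 (dvd_sum_of_dvd_addGroupDet hζ h) w
  rw [prod_pow_eq_pow_sum,
    ← addGroupDet_eq_prod_fourierSum_zmodChar hζ.toInteger_isPrimitiveRoot] at hprod
  refine (pow_dvd_pow _ ?_).trans hprod
  simp only [sum_add_distrib, sum_const, card_univ, Fintype.card_fun, ZMod.card, Fintype.card_fin,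
    smul_eq_mul, mul_one, sum_boole, Nat.cast_id, sum_ite_eq', mem_univ, if_true]
  have := pow_le_card_filter_dotProduct_eq_zero (firstMoment a)
  omega

end Cyclotomic

/-- If `p` is an odd prime and `p` divides the group determinant of
`G = (ℤ/pℤ)²`, then `p^(p+3)` divides it. -/
theorem stmt0 (p : ℕ) [Fact p.Prime] (hodd : Odd p)
    (a : (Fin 2 → ZMod p) → ℤ)
    (h : (p : ℤ) ∣ addGroupDet a) :
    (p : ℤ) ^ (p + 3) ∣ addGroupDet a := by
  have hp2 : p ≠ 2 := by rintro rfl; exact Nat.not_odd_iff_even.mpr even_two hodd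
  have hp3 : 3 ≤ p := (Fact.out : p.Prime).two_le.lt_of_ne' hp2
  have hexp : (p - 1) * (p + 3) = p ^ (1 + 1) + p ^ 1 + (p - 3) := by
    zify [hp3, (by omega : 1 ≤ p)]
    ring
  have : NeZero (p : ℚ) := ⟨Nat.cast_ne_zero.mpr (NeZero.ne p)⟩
  have : IsCyclotomicExtension {p} ℚ (CyclotomicField p ℚ) :=
    CyclotomicField.isCyclotomicExtension p ℚ
  have hζ := IsCyclotomicExtension.zeta_spec p ℚ (CyclotomicField p ℚ)
  refine dvd_of_algebraMap_dvd (S := 𝓞 (CyclotomicField p ℚ)) ?_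
  rw [eq_intCast, eq_intCast, Int.cast_pow, Int.cast_natCast]
  calc (p : 𝓞 (CyclotomicField p ℚ)) ^ (p + 3)
      ∣ ((hζ.toInteger - 1) ^ (p - 1)) ^ (p + 3) :=
        pow_dvd_pow_of_dvd
          (IsCyclotomicExtension.Rat.associated_zeta_sub_one_pow_prime p hζ).symm.dvd _
    _ = (hζ.toInteger - 1) ^ (p ^ (1 + 1) + p ^ 1 + (p - 3)) := by rw [← pow_mul, hexp]
    _ ∣ _ := zeta_sub_one_pow_dvd_addGroupDet hζ hp2 h
end

section
/- Let p be a prime, n ≥ 1, and let a : (ℤ/pℤ)ⁿ → ℤ be any assignment of integers to the elements of G = (ℤ/pℤ)ⁿ. If p divides the group determinant D_G((a_g)), then p^(1 + (pⁿ−1)/(p−1)) divides D_G((a_g)). -/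
open Matrix NumberField IsCyclotomicExtension.Rat

section GroupDeterminant

variable {G R : Type*} [AddCommGroup G] [Fintype G] [DecidableEq G] [CommRing R] [IsDomain R]

theorem AddChar.sum_neg_mul_eq_ite_of_injective {ψ : G → AddChar G R}
    (hψ : Function.Injective ψ) (w w' : G) :
    ∑ g, ψ w (-g) * ψ w' g = if w = w' then (Fintype.card G : R) else 0 := by
  have h : ∀ g, ψ w (-g) * ψ w' g = (ψ w' / ψ w) g := fun g => by
    rw [AddChar.div_apply, mul_comm]
  simp only [h, AddChar.sum_eq_ite, ← AddChar.one_eq_zero, div_eq_one, hψ.eq_iff, eq_comm]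

theorem det_of_addChar_ne_zero [CharZero R] {ψ : G → AddChar G R} (hψ : Function.Injective ψ) :
    (of fun g w => ψ w g).det ≠ 0 := by
  have horth : (of fun w g => ψ w (-g)) * (of fun g w => ψ w g) =
      diagonal fun _ => (Fintype.card G : R) := by
    ext w w'
    simp [mul_apply, diagonal_apply, AddChar.sum_neg_mul_eq_ite_of_injective hψ]
  intro h
  have := congrArg det horth
  rw [det_mul, h, mul_zero, det_diagonal, Finset.prod_const, eq_comm] at this
  exact pow_ne_zero _ (Nat.cast_ne_zero.mpr Fintype.card_ne_zero) this

theorem det_of_sub_eq_prod_sum_addChar [CharZero R] {ψ : G → AddChar G R}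
    (hψ : Function.Injective ψ) (b : G → R) :
    (of fun g h => b (g - h)).det = ∏ w, ∑ v, b v * ψ w (-v) := by
  set Q : Matrix G G R := of fun g w => ψ w g
  have hdiag : (of fun g h => b (g - h)) * Q = Q * diagonal fun w => ∑ v, b v * ψ w (-v) := by
    ext g w
    rw [mul_diagonal, mul_apply, Finset.mul_sum,
      ← (Equiv.subLeft g).sum_comp (fun h => of (fun g h => b (g - h)) g h * Q h w)]
    refine Finset.sum_congr rfl fun v _ => ?_
    simp only [Q, of_apply, Equiv.subLeft_apply, sub_sub_cancel]
    rw [sub_eq_add_neg, AddChar.map_add_eq_mul]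
    ring
  have := congrArg det hdiag
  rw [det_mul, det_mul, det_diagonal, mul_comm] at this
  exact mul_left_cancel₀ (det_of_addChar_ne_zero hψ) this

end GroupDeterminant

section DotProductChar

variable {p n : ℕ} [NeZero p] {R : Type*} [CommRing R] {ζ : R}

noncomputable def dotProductChar (hζ : ζ ^ p = 1) (w : Fin n → ZMod p) :
    AddChar (Fin n → ZMod p) R :=
  (AddChar.zmodChar p hζ).compAddMonoidHom (AddMonoidHom.mk' (w ⬝ᵥ ·) (dotProduct_add w))

theorem dotProductChar_apply (hζ : ζ ^ p = 1) (w v : Fin n → ZMod p) :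
    dotProductChar hζ w v = ζ ^ (w ⬝ᵥ v).val :=
  AddChar.zmodChar_apply hζ _

theorem dotProductChar_injective (hζ : IsPrimitiveRoot ζ p) :
    Function.Injective (dotProductChar (n := n) hζ.pow_eq_one) := by
  intro w w' h
  funext j
  have hj := DFunLike.congr_fun h (Pi.single j 1)
  simp only [dotProductChar_apply, dotProduct_single_one] at hj
  exact ZMod.val_injective p (hζ.pow_inj (ZMod.val_lt _) (ZMod.val_lt _) hj)

theorem sub_one_dvd_dotProductChar_sub_one (hζ : ζ ^ p = 1) (w v : Fin n → ZMod p) :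
    ζ - 1 ∣ dotProductChar hζ w v - 1 := by
  rw [dotProductChar_apply]
  exact sub_one_dvd_pow_sub_one ζ _

end DotProductChar

theorem Prime.pow_card_dvd_prod_of_dvd_sub {ι α : Type*} [CommRing α] {π : α} (hπ : Prime π)
    {s : Finset ι} {f : ι → α} {t : α} (hf : ∀ i ∈ s, π ∣ f i - t)
    (hdvd : π ∣ ∏ i ∈ s, f i) : π ^ s.card ∣ ∏ i ∈ s, f i := by
  obtain ⟨i, hi, hπi⟩ := hπ.exists_mem_finset_dvd hdvd
  have hπt : π ∣ t := by simpa using dvd_sub hπi (hf i hi)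
  rw [← Finset.prod_const]
  exact Finset.prod_dvd_prod_of_dvd _ _ fun j hj => by simpa using dvd_add (hf j hj) hπt

section Cyclotomic

variable {p : ℕ} [hp : Fact p.Prime] {K : Type*} [Field K] [NumberField K]
  [IsCyclotomicExtension {p} ℚ K] {ζ : K} (hζ : IsPrimitiveRoot ζ p)
include hζ

theorem IsPrimitiveRoot.toInteger_sub_one_pow_card_dvd_addGroupDet {n : ℕ}
    (a : (Fin n → ZMod p) → ℤ) (h : (p : ℤ) ∣ addGroupDet a) :
    (hζ.toInteger - 1) ^ p ^ n ∣ (addGroupDet a : 𝓞 K) := by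
  have hζ' := hζ.toInteger_isPrimitiveRoot
  have hfac : (addGroupDet a : 𝓞 K) =
      ∏ w, ∑ v, (a v : 𝓞 K) * dotProductChar hζ'.pow_eq_one w (-v) := by
    rw [addGroupDet, ← det_of_sub_eq_prod_sum_addChar (dotProductChar_injective hζ')]
    exact (Int.castRingHom (𝓞 K)).map_det _
  have hcard : (Finset.univ : Finset (Fin n → ZMod p)).card = p ^ n := by
    simp [ZMod.card]
  rw [hfac, ← hcard]
  refine hζ.zeta_sub_one_prime'.pow_card_dvd_prod_of_dvd_sub (t := ∑ v, (a v : 𝓞 K))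
    (fun w _ => ?_) ?_
  · rw [← Finset.sum_sub_distrib]
    refine Finset.dvd_sum fun v _ => ?_
    rw [← mul_sub_one]
    exact (sub_one_dvd_dotProductChar_sub_one _ w (-v)).mul_left _
  · rw [← hfac]
    exact hζ.toInteger_sub_one_dvd_prime'.trans (by exact_mod_cast Int.cast_dvd_cast _ _ h)

theorem IsPrimitiveRoot.intCast_pow_dvd_of_toInteger_sub_one_pow_dvd {m : ℤ} (j : ℕ)
    (h : (hζ.toInteger - 1) ^ ((p - 1) * j + 1) ∣ (m : 𝓞 K)) : (p : ℤ) ^ (j + 1) ∣ m := by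
  induction j generalizing m with
  | zero => simpa using (zeta_sub_one_dvd_intCast_iff' p hζ).mp (by simpa using h)
  | succ j ih =>
    obtain ⟨m', rfl⟩ : (p : ℤ) ∣ m :=
      (zeta_sub_one_dvd_intCast_iff' p hζ).mp ((dvd_pow_self _ (by omega)).trans h)
    have hp0 : (p : 𝓞 K) ≠ 0 := Nat.cast_ne_zero.mpr hp.out.ne_zero
    rw [mul_add_one, add_right_comm, pow_add,
      ((associated_zeta_sub_one_pow_prime p hζ).mul_left _).dvd_iff_dvd_left, Int.cast_mul,
      Int.cast_natCast, mul_comm (p : 𝓞 K), mul_dvd_mul_iff_right hp0] at h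
    rw [pow_succ']
    exact mul_dvd_mul_left _ (ih h)

end Cyclotomic

theorem stmt2_general (p : ℕ) [Fact p.Prime] (n : ℕ)
    (a : (Fin n → ZMod p) → ℤ)
    (h : (p : ℤ) ∣ addGroupDet a) :
    (p : ℤ) ^ (1 + (p ^ n - 1) / (p - 1)) ∣ addGroupDet a := by
  -- The library instance is stated for `CyclotomicField.algebra`, which is not reducibly
  -- the `ℚ`-algebra structure that instance search finds.
  have : IsCyclotomicExtension {p} ℚ (CyclotomicField p ℚ) :=
    CyclotomicField.isCyclotomicExtension p ℚ
  have hζ := IsCyclotomicExtension.zeta_spec p ℚ (CyclotomicField p ℚ)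
  set q := (p ^ n - 1) / (p - 1)
  have hpn : p ^ n = (p - 1) * q + 1 := by
    have := Nat.div_mul_cancel (Nat.sub_one_dvd_pow_sub_one p n)
    have := Nat.one_le_pow n p (Fact.out : p.Prime).pos
    grind
  rw [add_comm]
  refine hζ.intCast_pow_dvd_of_toInteger_sub_one_pow_dvd q ?_
  rw [← hpn]
  exact hζ.toInteger_sub_one_pow_card_dvd_addGroupDet a h

/-- Let `p` be a prime and `n ≥ 1`.  If `p` divides the group determinant of
`G = (ℤ/pℤ)ⁿ`, then `p^(1 + (pⁿ - 1)/(p - 1))` divides it. -/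
theorem stmt2 (p : ℕ) [Fact p.Prime] (n : ℕ) (hn : 1 ≤ n)
    (a : (Fin n → ZMod p) → ℤ)
    (h : (p : ℤ) ∣ addGroupDet a) :
    (p : ℤ) ^ (1 + (p ^ n - 1) / (p - 1)) ∣ addGroupDet a :=
  stmt2_general p n a h
end

section
/- Let p be an odd prime, let ζ = e^(2πi/p) be a primitive p-th root of unity, and let f ∈ ℤ[x]. Then both S = Σ_{j=0}^{p−1} f(ζ^j)^p and P = Π_{j=0}^{p−1} f(ζ^j) are rational integers, p divides S, and S/p ≡ P (mod p²); equivalently, p³ divides S − pP. -/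
/-!
Write `f = ∑ cₐ Xᵃ` and index the monomials of `∏_{i ∈ ℤ/p} f(xᵢ)` by tuples `k : ℤ/p → ℕ`, with
weight `∏ c_{k i}`, total `∑ k i` and moment `∑ i · k i` (both mod `p`). Orthogonality of the
characters `j ↦ ζ^{jt}` gives `S = p ∑_{total k = 0} weight k`, and, after averaging over the
rotations `k ↦ k (· + t)` (which shift the moment by `t · total`),
`P = ∑_{total k = 0} weight k · ζ^{moment k}`. Hence
`S/p - P = ∑_{total k = 0} weight k (1 - ζ^{moment k})`. Constant tuples contribute nothing
because `p` is odd, and the others fall into rotation orbits of size `p` on which the summand is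
constant, so `S/p - P` is `p` times a sum of the same shape. An integer of the form
`∑ w (1 - ζ^e)` is divisible by `p`, since `Φ_p` divides `∑ w (1 - Xᵉ) - m` and `Φ_p(1) = p`;
used twice, this gives `p² ∣ S/p - P`. `P` is an integer because it is the resultant
`Res(Xᵖ - 1, f)`.
-/

open Polynomial Finset Function

theorem Finset.exists_subset_sum_eq_nsmul_sum_of_minimalPeriod_eq {α M : Type*} [DecidableEq α]
    [AddCommMonoid M] {σ : α → α} {F : α → M} {n : ℕ} (hn : 0 < n) (s : Finset α)
    (hs : Set.MapsTo σ s s) (hF : ∀ x ∈ s, F (σ x) = F x)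
    (hper : ∀ x ∈ s, minimalPeriod σ x = n) :
    ∃ R ⊆ s, ∑ x ∈ s, F x = n • ∑ x ∈ R, F x := by
  induction s using Finset.strongInduction with
  | _ s ih =>
  obtain rfl | ⟨x, hx⟩ := s.eq_empty_or_nonempty
  · exact ⟨∅, by simp⟩
  set O := (range n).image (σ^[·] x)
  have hinj : Set.InjOn (σ^[·] x) (range n) := by
    simpa [← hper x hx] using iterate_injOn_Iio_minimalPeriod (f := σ) (x := x)
  have hF_iter (m : ℕ) : F (σ^[m] x) = F x := by
    induction m with
    | zero => rfl
    | succ m ih => rw [iterate_succ_apply', hF _ (hs.iterate m hx), ih]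
  have hOs : O ⊆ s := by
    simp only [O, image_subset_iff]
    exact fun m _ => hs.iterate m hx
  have hxO : x ∈ O := mem_image.2 ⟨0, mem_range.2 hn, rfl⟩
  have hsumO : ∑ y ∈ O, F y = n • F x := by simp [O, sum_image hinj, hF_iter]
  have hcompl : Set.MapsTo σ ↑(s \ O) ↑(s \ O) := by
    intro y hy
    simp only [coe_sdiff, Set.mem_sdiff, mem_coe] at hy ⊢
    refine ⟨hs hy.1, fun hσy => hy.2 ?_⟩
    obtain ⟨t, -, ht⟩ := mem_image.1 hσy
    have hy_eq : σ^[n - 1 + t] x = y := by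
      rw [iterate_add_apply, ht, ← iterate_succ_apply, Nat.succ_eq_add_one,
        Nat.sub_add_cancel hn, ← hper y hy.1, iterate_minimalPeriod]
    rw [← hy_eq, ← iterate_mod_minimalPeriod_eq, hper x hx]
    exact mem_image.2 ⟨_, mem_range.2 (Nat.mod_lt _ hn), rfl⟩
  obtain ⟨R, hRs, hR⟩ := ih (s \ O) (sdiff_ssubset hOs ⟨x, hxO⟩) hcompl
    (fun y hy => hF y (mem_sdiff.1 hy).1) (fun y hy => hper y (mem_sdiff.1 hy).1)
  have hxR : x ∉ R := fun h => (mem_sdiff.1 (hRs h)).2 hxO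
  refine ⟨insert x R, insert_subset hx (hRs.trans sdiff_subset), ?_⟩
  rw [← sum_sdiff hOs, hR, hsumO, sum_insert hxR, nsmul_add, add_comm]

@[to_additive]
theorem ZMod.prod_val_eq_prod_range {M : Type*} [CommMonoid M] (n : ℕ) [NeZero n] (g : ℕ → M) :
    ∏ j : ZMod n, g j.val = ∏ j ∈ range n, g j :=
  prod_nbij (·.val) (fun j _ => mem_range.2 j.val_lt) (fun _ _ _ _ h => ZMod.val_injective n h)
    (fun j hj => ⟨j, mem_univ _, ZMod.val_cast_of_lt (mem_range.1 hj)⟩) fun _ _ => rfl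

theorem ZMod.sum_univ_eq_zero_of_odd {n : ℕ} [NeZero n] (hn : Odd n) : ∑ i : ZMod n, i = 0 := by
  obtain ⟨m, rfl⟩ := hn
  have h := ZMod.sum_val_eq_sum_range (2 * m + 1) (Nat.cast : ℕ → ZMod (2 * m + 1))
  simp only [ZMod.natCast_zmod_val] at h
  rw [h, ← Nat.cast_sum, sum_range_id, Nat.add_sub_cancel, mul_left_comm,
    Nat.mul_div_cancel_left _ two_pos, Nat.cast_mul, ZMod.natCast_self, zero_mul]

theorem AddChar.prod_pow_eq_map_sum {ι A M : Type*} [Fintype ι] [CommRing A] [CommMonoid M]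
    (ψ : AddChar A M) (x : ι → A) (m : ι → ℕ) : ∏ i, ψ (x i) ^ m i = ψ (∑ i, x i * m i) := by
  simp_rw [← ψ.map_nsmul_eq_pow, nsmul_eq_mul, mul_comm (m _ : A)]
  exact (map_prod ψ.toMonoidHom (fun i => Multiplicative.ofAdd (x i * m i)) univ).symm

theorem Polynomial.prod_aeval_eq_sum {ι R A : Type*} [Fintype ι] [DecidableEq ι] [CommRing R]
    [CommRing A] [Algebra R A] (f : R[X]) (z : ι → A) :
    ∏ i, aeval (z i) f =
      ∑ k : ι → Fin (f.natDegree + 1), (∏ i, f.coeff (k i)) • ∏ i, z i ^ (k i : ℕ) := by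
  simp_rw [aeval_eq_sum_range, ← Fin.sum_univ_eq_sum_range (fun j => f.coeff j • _ ^ j),
    Fintype.prod_sum]
  refine sum_congr rfl fun k _ => ?_
  simp_rw [Algebra.smul_def, prod_mul_distrib, map_prod]

theorem IsPrimitiveRoot.prod_aeval_pow_eq_resultant {K : Type*} [Field K] {n : ℕ} (hn : 0 < n)
    {ζ : K} (hζ : IsPrimitiveRoot ζ n) (f : ℤ[X]) :
    ∏ j ∈ range n, aeval (ζ ^ j) f = ((X ^ n - 1 : ℤ[X]).resultant f : K) := by
  have h := resultant_eq_prod_eval (X ^ n - C (1 : K)) (f.map (Int.castRingHom K)) f.natDegree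
    natDegree_map_le (X_pow_sub_one_splits hζ)
  rw [← nthRoots, hζ.nthRoots_eq (one_pow n), natDegree_X_pow_sub_C,
    leadingCoeff_X_pow_sub_C hn, one_pow, one_mul, C_1] at h
  have hdeg : (X ^ n - 1 : ℤ[X]).natDegree = n := by
    simpa using natDegree_X_pow_sub_C (R := ℤ) (n := n) (r := 1)
  have hmap : (X ^ n - 1 : ℤ[X]).map (Int.castRingHom K) = X ^ n - 1 := by simp
  rw [← eq_intCast (Int.castRingHom K), ← resultant_map_map, hdeg, hmap, h]
  simp [Multiset.map_map, prod_eq_multiset_prod, aeval_def, eval_map]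

theorem IsPrimitiveRoot.dvd_eval_one_sub_of_aeval_eq {K : Type*} [Field K] [CharZero K] {p : ℕ}
    [Fact p.Prime] {ζ : K} (hζ : IsPrimitiveRoot ζ p) {g : ℤ[X]} {m : ℤ} (h : aeval ζ g = m) :
    (p : ℤ) ∣ g.eval 1 - m := by
  have hp := (Fact.out : p.Prime).pos
  have hdvd : cyclotomic p ℤ ∣ g - C m := by
    rw [cyclotomic_eq_minpoly hζ hp]
    exact minpoly.isIntegrallyClosed_dvd (hζ.isIntegral hp) (by simp [h])
  simpa using eval_dvd (x := 1) hdvd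

theorem IsPrimitiveRoot.dvd_of_intCast_eq_sum_mul_one_sub_pow {K : Type*} [Field K] [CharZero K]
    {p : ℕ} [Fact p.Prime] {ζ : K} (hζ : IsPrimitiveRoot ζ p) {ι : Type*} (s : Finset ι)
    (w : ι → ℤ) (e : ι → ℕ) {m : ℤ} (h : (m : K) = ∑ i ∈ s, w i * (1 - ζ ^ e i)) :
    (p : ℤ) ∣ m := by
  have := hζ.dvd_eval_one_sub_of_aeval_eq (g := ∑ i ∈ s, C (w i) * (1 - X ^ e i)) (m := m)
    (by simp [h])
  rwa [eval_finsetSum, sum_eq_zero fun i _ => by simp, zero_sub, dvd_neg] at this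

namespace CyclicTuple

variable {n : ℕ} {α : Type*}

def rotate (t : ZMod n) (k : ZMod n → α) : ZMod n → α := fun i => k (i + t)

@[simp] theorem rotate_zero (k : ZMod n → α) : rotate 0 k = k :=
  funext fun i => by simp [rotate]

theorem rotate_rotate (s t : ZMod n) (k : ZMod n → α) :
    rotate s (rotate t k) = rotate (s + t) k :=
  funext fun i => by simp [rotate, add_assoc]

theorem rotate_bijective (t : ZMod n) : Bijective (rotate t : (ZMod n → α) → (ZMod n → α)) :=
  bijective_iff_has_inverse.2 ⟨rotate (-t), fun k => by simp [rotate_rotate],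
    fun k => by simp [rotate_rotate]⟩

theorem iterate_rotate_one (m : ℕ) (k : ZMod n → α) :
    (rotate 1)^[m] k = rotate (m : ZMod n) k := by
  induction m with
  | zero => simp
  | succ m ih => rw [iterate_succ_apply', ih, rotate_rotate, Nat.cast_succ, add_comm]

theorem apply_eq_apply_zero_of_rotate_one_eq [NeZero n] {k : ZMod n → α} (hk : rotate 1 k = k)
    (i : ZMod n) : k i = k 0 := by
  have := congrFun (iterate_fixed hk i.val) 0
  rwa [iterate_rotate_one, ZMod.natCast_zmod_val, rotate, zero_add] at this

theorem minimalPeriod_rotate_one {p : ℕ} [Fact p.Prime] {k : ZMod p → α} (hk : rotate 1 k ≠ k) :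
    minimalPeriod (rotate 1) k = p := by
  have hper : IsPeriodicPt (rotate 1) p k := by
    simp [IsPeriodicPt, IsFixedPt, iterate_rotate_one]
  rcases (Nat.dvd_prime Fact.out).1 hper.minimalPeriod_dvd with h | h
  · exact absurd (minimalPeriod_eq_one_iff_isFixedPt.1 h) hk
  · exact h

variable [NeZero n] {d : ℕ}

def weight {R : Type*} [CommRing R] (f : R[X]) (k : ZMod n → Fin d) : R := ∏ i, f.coeff (k i)

def total (k : ZMod n → Fin d) : ZMod n := ∑ i, ((k i : ℕ) : ZMod n)

def moment (k : ZMod n → Fin d) : ZMod n := ∑ i, i * ((k i : ℕ) : ZMod n)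

theorem weight_rotate {R : Type*} [CommRing R] (f : R[X]) (t : ZMod n) (k : ZMod n → Fin d) :
    weight f (rotate t k) = weight f k :=
  Equiv.prod_comp (Equiv.addRight t) fun i => f.coeff (k i)

theorem total_rotate (t : ZMod n) (k : ZMod n → Fin d) : total (rotate t k) = total k :=
  Equiv.sum_comp (Equiv.addRight t) fun i => ((k i : ℕ) : ZMod n)

theorem moment_rotate (t : ZMod n) (k : ZMod n → Fin d) :
    moment (rotate t k) = moment k - t * total k := by
  simp only [moment, total, rotate, mul_sum, ← sum_sub_distrib, ← sub_mul]
  exact Fintype.sum_equiv (Equiv.addRight t) _ _ fun i => by simp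

theorem moment_eq_zero_of_rotate_one_eq (hn : Odd n) {k : ZMod n → Fin d}
    (hk : rotate 1 k = k) : moment k = 0 := by
  simp only [moment, apply_eq_apply_zero_of_rotate_one_eq hk, ← sum_mul,
    ZMod.sum_univ_eq_zero_of_odd hn, zero_mul]

variable {K : Type*} [Field K] {ψ : AddChar (ZMod n) K}

theorem sum_aeval_pow_eq_mul_sum_weight (hψ : ψ.IsPrimitive) (f : ℤ[X]) :
    ∑ j, aeval (ψ j) f ^ n =
      n * ∑ k : ZMod n → Fin (f.natDegree + 1) with total k = 0, ((weight f k : ℤ) : K) := by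
  have hexp (j : ZMod n) : aeval (ψ j) f ^ n =
      ∑ k : ZMod n → Fin (f.natDegree + 1), ((weight f k : ℤ) : K) * ψ (j * total k) := by
    have hpow : ∏ _i : ZMod n, aeval (ψ j) f = aeval (ψ j) f ^ n := by
      rw [prod_const, card_univ, ZMod.card]
    rw [← hpow, prod_aeval_eq_sum]
    refine sum_congr rfl fun k _ => ?_
    rw [zsmul_eq_mul, ψ.prod_pow_eq_map_sum (fun _ => j) (fun i => k i), total, mul_sum, weight,
      Int.cast_prod]
  simp_rw [hexp]
  rw [sum_comm, sum_filter, mul_sum]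
  refine sum_congr rfl fun k _ => ?_
  rw [← mul_sum, AddChar.sum_mulShift _ hψ, ZMod.card]
  split_ifs <;> ring

theorem prod_aeval_eq_sum_weight_mul (f : ℤ[X]) :
    ∏ j, aeval (ψ j) f =
      ∑ k : ZMod n → Fin (f.natDegree + 1), ((weight f k : ℤ) : K) * ψ (moment k) := by
  rw [prod_aeval_eq_sum]
  refine sum_congr rfl fun k _ => ?_
  rw [zsmul_eq_mul, ψ.prod_pow_eq_map_sum (fun i => i) (fun i => k i), weight, Int.cast_prod]
  rfl

theorem sum_weight_mul_eq_sum_total_eq_zero [CharZero K] (hψ : ψ.IsPrimitive) (f : ℤ[X]) :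
    ∑ k : ZMod n → Fin d, ((weight f k : ℤ) : K) * ψ (moment k) =
      ∑ k : ZMod n → Fin d with total k = 0, ((weight f k : ℤ) : K) * ψ (moment k) := by
  have hrot (t : ZMod n) : ∑ k : ZMod n → Fin d, ((weight f k : ℤ) : K) * ψ (moment k) =
      ∑ k : ZMod n → Fin d, ((weight f k : ℤ) : K) * ψ (moment k) * ψ (t * total k) :=
    Fintype.sum_bijective (rotate t) (rotate_bijective t) _ _ fun k => by
      rw [weight_rotate, moment_rotate, total_rotate, mul_assoc, ← AddChar.map_add_eq_mul,
        sub_add_cancel]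
  refine mul_left_cancel₀ (Nat.cast_ne_zero.2 (NeZero.ne n) : (n : K) ≠ 0) ?_
  calc (n : K) * ∑ k : ZMod n → Fin d, ((weight f k : ℤ) : K) * ψ (moment k)
      = ∑ t : ZMod n, ∑ k : ZMod n → Fin d,
          ((weight f k : ℤ) : K) * ψ (moment k) * ψ (t * total k) := by
        rw [← sum_congr rfl fun t _ => hrot t, sum_const, card_univ, ZMod.card, nsmul_eq_mul]
    _ = _ := by
        rw [sum_comm, sum_filter, mul_sum]
        refine sum_congr rfl fun k _ => ?_
        rw [← mul_sum, AddChar.sum_mulShift _ hψ, ZMod.card]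
        split_ifs <;> ring

theorem sq_dvd_of_eq_sum_weight_mul_one_sub {p : ℕ} [Fact p.Prime] (hodd : Odd p) {K : Type*}
    [Field K] [CharZero K] {ζ : K} (hζ : IsPrimitiveRoot ζ p) (f : ℤ[X]) {D : ℤ}
    (hD : (D : K) = ∑ k : ZMod p → Fin d with total k = 0,
      ((weight f k : ℤ) : K) * (1 - ζ ^ (moment k).val)) :
    (p : ℤ) ^ 2 ∣ D := by
  set F : (ZMod p → Fin d) → K := fun k => ((weight f k : ℤ) : K) * (1 - ζ ^ (moment k).val)
  set A : Finset (ZMod p → Fin d) := {k | total k = 0}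
  set B := A.filter fun k => rotate 1 k ≠ k
  have hsplit : ∑ k ∈ B, F k = ∑ k ∈ A, F k :=
    sum_filter_of_ne fun k _ hFk hk => hFk (by simp [F, moment_eq_zero_of_rotate_one_eq hodd hk])
  have hmaps : Set.MapsTo (rotate 1) (B : Set (ZMod p → Fin d)) B := by
    intro k hk
    simp only [B, A, coe_filter, mem_filter, mem_univ, true_and] at hk ⊢
    exact ⟨by rw [total_rotate, hk.1], fun h => hk.2 ((rotate_bijective 1).injective h)⟩
  have hinv : ∀ k ∈ B, F (rotate 1 k) = F k := by
    intro k hk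
    simp only [B, A, mem_filter, mem_univ, true_and] at hk
    simp [F, weight_rotate, moment_rotate, hk.1]
  obtain ⟨R, -, hR⟩ := exists_subset_sum_eq_nsmul_sum_of_minimalPeriod_eq
    (Fact.out : p.Prime).pos B hmaps hinv fun k hk => minimalPeriod_rotate_one (mem_filter.1 hk).2
  obtain ⟨G, rfl⟩ := hζ.dvd_of_intCast_eq_sum_mul_one_sub_pow _ _ _ hD
  have hG : (G : K) = ∑ k ∈ R, F k := by
    refine mul_left_cancel₀ (Nat.cast_ne_zero.2 (NeZero.ne p) : (p : K) ≠ 0) ?_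
    rw [← nsmul_eq_mul p (∑ k ∈ R, F k), ← hR, hsplit, ← Int.cast_natCast, ← Int.cast_mul, hD]
  rw [pow_two]
  exact mul_dvd_mul_left _ (hζ.dvd_of_intCast_eq_sum_mul_one_sub_pow _ _ _ hG)

end CyclicTuple

open CyclicTuple in
theorem IsPrimitiveRoot.exists_sum_pow_aeval_prod_aeval_cube_dvd {K : Type*} [Field K] [CharZero K]
    {p : ℕ} (hp : p.Prime) (hodd : Odd p) {ζ : K} (hζ : IsPrimitiveRoot ζ p) (f : ℤ[X]) :
    ∃ S P : ℤ,
      (S : K) = ∑ j ∈ range p, aeval (ζ ^ j) f ^ p ∧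
      (P : K) = ∏ j ∈ range p, aeval (ζ ^ j) f ∧
      (p : ℤ) ∣ S ∧ (p : ℤ) ^ 3 ∣ S - p * P := by
  have : Fact p.Prime := ⟨hp⟩
  set ψ := AddChar.zmodChar p hζ.pow_eq_one
  have hψ : ψ.IsPrimitive := AddChar.zmodChar_primitive_of_primitive_root p hζ
  set W := ∑ k : ZMod p → Fin (f.natDegree + 1) with total k = 0, weight f k
  have hS : ∑ j ∈ range p, aeval (ζ ^ j) f ^ p = p * W := by
    rw [← ZMod.sum_val_eq_sum_range p fun j => aeval (ζ ^ j) f ^ p]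
    simpa [W, ψ, AddChar.zmodChar_apply] using sum_aeval_pow_eq_mul_sum_weight hψ f
  have hP : ∏ j ∈ range p, aeval (ζ ^ j) f =
      ∑ k : ZMod p → Fin (f.natDegree + 1) with total k = 0,
        ((weight f k : ℤ) : K) * ζ ^ (moment k).val := by
    rw [← ZMod.prod_val_eq_prod_range p fun j => aeval (ζ ^ j) f]
    simpa [ψ, AddChar.zmodChar_apply] using
      (prod_aeval_eq_sum_weight_mul (ψ := ψ) f).trans (sum_weight_mul_eq_sum_total_eq_zero hψ f)
  set P := (X ^ p - 1 : ℤ[X]).resultant f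
  have hPP : ∏ j ∈ range p, aeval (ζ ^ j) f = P := hζ.prod_aeval_pow_eq_resultant hp.pos f
  obtain ⟨G, hG⟩ := sq_dvd_of_eq_sum_weight_mul_one_sub hodd hζ f (d := f.natDegree + 1)
    (D := W - P) (by
      rw [Int.cast_sub, ← hPP, hP]
      push_cast [W, mul_sub, sum_sub_distrib]
      simp)
  refine ⟨p * W, P, by rw [hS]; push_cast; rfl, hPP.symm, dvd_mul_right _ _, ⟨G, ?_⟩⟩
  rw [← mul_sub, hG]
  ring

/-- Let `p` be an odd prime, `ζ = e^(2πi/p)`, and `f ∈ ℤ[x]`.  Then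
`S = Σ_{j<p} f(ζ^j)^p` and `P = Π_{j<p} f(ζ^j)` are rational integers,
`p ∣ S`, and `S/p ≡ P (mod p²)`, i.e. `p³ ∣ S - pP`. -/
theorem stmt12 (p : ℕ) (hp : p.Prime) (hodd : Odd p) (f : Polynomial ℤ)
    (ζ : ℂ) (hζ : ζ = Complex.exp (2 * Real.pi * Complex.I / p)) :
    ∃ S P : ℤ,
      (S : ℂ) = ∑ j ∈ Finset.range p, (aeval (ζ ^ j) f) ^ p ∧
      (P : ℂ) = ∏ j ∈ Finset.range p, aeval (ζ ^ j) f ∧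
      (p : ℤ) ∣ S ∧ (p : ℤ) ^ 3 ∣ S - p * P :=
  (hζ ▸ Complex.isPrimitiveRoot_exp p hp.ne_zero).exists_sum_pow_aeval_prod_aeval_cube_dvd hp hodd f
end

section
/- Let p ≥ 5 be a prime, let k ≥ 0 be an integer, and let A₁, A₂, A₃ be integers none of which is divisible by p. Let ω = e^(2πi/p). Then the integer N = Π_{i=0}^{p−1} Π_{j=0}^{p−1} ( A₁ p^(1+k) + A₂(1 − ω^i) + A₃(1 − ω^j)² ) is exactly divisible by p^(p+3+k), i.e., p^(p+3+k) ∣ N and p^(p+4+k) ∤ N. -/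
/-!
Work in the ring of integers of `K = ℚ(ζ)`, `ζ` a primitive `p`-th root of unity, where
`π = ζ - 1` is prime and `p` is associated to `π ^ (p - 1)`. The product is invariant under
`Gal(K/ℚ)`, hence a rational integer `N`, and its `π`-adic valuation is computed factor by
factor. The factor at `(1, 1)` is `A₁ p^(1+k)`, of valuation `(p - 1)(1 + k)`; at `(1, η)` with
`η ≠ 1` the term `A₃ (1 - η)²` of valuation `2` dominates, because `(p - 1)(1 + k) > 2` for
`p ≥ 5`; at `(ξ, η)` with `ξ ≠ 1` the term `A₂ (1 - ξ)` of valuation `1` dominates. Summing,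
`v_π(N) = (p - 1)(1 + k) + 2(p - 1) + p(p - 1) = (p - 1)(p + 3 + k)`, that is, `p` divides `N`
exactly `p + 3 + k` times.
-/

open Polynomial NumberField Finset

theorem Algebra.intCast_dvd_intCast_iff {S : Type*} [CommRing S] [Nontrivial S]
    [Module.Free ℤ S] [Module.Finite ℤ S] {a b : ℤ} : (a : S) ∣ (b : S) ↔ a ∣ b := by
  refine ⟨fun h ↦ ?_, Int.cast_dvd_cast a b⟩
  have := map_dvd (Algebra.norm ℤ) h
  rwa [← eq_intCast (algebraMap ℤ S) a, ← eq_intCast (algebraMap ℤ S) b, Algebra.norm_algebraMap,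
    Algebra.norm_algebraMap, Int.pow_dvd_pow_iff Module.finrank_pos.ne'] at this

theorem emultiplicity_prod_of_forall_eq {α ι : Type*} [CommMonoidWithZero α] [IsCancelMulZero α]
    {π : α} (hπ : Prime π) {s : Finset ι} {f : ι → α} {c : ℕ∞}
    (h : ∀ i ∈ s, emultiplicity π (f i) = c) : emultiplicity π (∏ i ∈ s, f i) = #s * c := by
  rw [Finset.emultiplicity_prod hπ, Finset.sum_congr rfl h]
  simp

section RootsOfUnity

variable {R M : Type*} [CommRing R] [IsDomain R] [CommMonoid M]

theorem IsPrimitiveRoot.prod_range_pow {ζ : R} {n : ℕ} (hζ : IsPrimitiveRoot ζ n) (f : R → M) :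
    ∏ i ∈ range n, f (ζ ^ i) = ∏ μ ∈ nthRootsFinset n (1 : R), f μ := by
  rcases n.eq_zero_or_pos with rfl | hn
  · simp
  refine prod_nbij (ζ ^ ·) (fun i _ ↦ ?_) (fun i hi j hj ↦ ?_) (fun μ hμ ↦ ?_) (fun _ _ ↦ rfl)
  · rw [Polynomial.mem_nthRootsFinset hn, ← pow_mul, mul_comm, pow_mul, hζ.pow_eq_one, one_pow]
  · exact hζ.pow_inj (mem_range.mp hi) (mem_range.mp hj)
  · have : NeZero n := ⟨hn.ne'⟩
    obtain ⟨i, hi, rfl⟩ := hζ.eq_pow_of_pow_eq_one ((Polynomial.mem_nthRootsFinset hn 1).mp hμ)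
    exact ⟨i, mem_range.mpr hi, rfl⟩

theorem prod_nthRootsFinset_comp_mulEquiv {E : Type*} [EquivLike E R R] [MulEquivClass E R R]
    (σ : E) (n : ℕ) (f : R → M) :
    ∏ μ ∈ nthRootsFinset n (1 : R), f (σ μ) = ∏ μ ∈ nthRootsFinset n (1 : R), f μ := by
  rcases n.eq_zero_or_pos with rfl | hn
  · simp
  refine prod_equiv (σ : R ≃* R).toEquiv (fun μ ↦ ?_) (fun _ _ ↦ rfl)
  simp [mem_nthRootsFinset hn, ← map_pow]

theorem prod_nthRootsFinset_eq_mul_prod_primitiveRoots {p : ℕ} (hp : p.Prime) (f : R → M) :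
    ∏ μ ∈ nthRootsFinset p (1 : R), f μ = f 1 * ∏ μ ∈ primitiveRoots p R, f μ := by
  classical
  rw [nthRootsFinset_eq_of_prime hp, prod_union, prod_singleton, mul_comm]
  simpa [mem_primitiveRoots hp.pos] using hp.one_lt.ne'

theorem IsPrimitiveRoot.associated_sub_one {n : ℕ} [NeZero n] {ζ μ : R}
    (hζ : IsPrimitiveRoot ζ n) (hμ : IsPrimitiveRoot μ n) : Associated (ζ - 1) (μ - 1) := by
  obtain ⟨i, -, hi, rfl⟩ := hζ.isPrimitiveRoot_iff.mp hμ
  exact hζ.associated_sub_one_pow_sub_one_of_coprime hi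

end RootsOfUnity

namespace IsPrimitiveRoot

variable {p : ℕ} [hp : Fact p.Prime] {K : Type*} [Field K] [NumberField K] {ζ : K}
  (hζ : IsPrimitiveRoot ζ p)
include hζ

theorem toInteger_sub_one_pow_dvd_intCast_iff (m : ℕ) (N : ℤ) :
    (hζ.toInteger - 1) ^ ((p - 1) * m) ∣ (N : 𝓞 K) ↔ (p : ℤ) ^ m ∣ N := by
  rw [← Algebra.intCast_dvd_intCast_iff (S := 𝓞 K), pow_mul, Int.cast_pow, Int.cast_natCast]
  exact (IsCyclotomicExtension.Rat.associated_zeta_sub_one_pow_prime p hζ).pow_pow.dvd_iff_dvd_left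

variable [IsCyclotomicExtension {p} ℚ K]

theorem emultiplicity_toInteger_sub_one_natCast :
    emultiplicity (hζ.toInteger - 1) (p : 𝓞 K) = (p - 1 : ℕ) :=
  (emultiplicity_eq_of_associated_right
    (IsCyclotomicExtension.Rat.associated_zeta_sub_one_pow_prime p hζ)).symm.trans
    (emultiplicity_pow_self_of_prime hζ.zeta_sub_one_prime' _)

theorem emultiplicity_toInteger_sub_one_intCast_eq_zero {A : ℤ} (hA : ¬(p : ℤ) ∣ A) :
    emultiplicity (hζ.toInteger - 1) (A : 𝓞 K) = 0 :=
  emultiplicity_eq_zero.mpr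
    (mt (IsCyclotomicExtension.Rat.zeta_sub_one_dvd_intCast_iff' p hζ).mp hA)

theorem emultiplicity_toInteger_sub_one_one_sub {μ : 𝓞 K} (hμ : IsPrimitiveRoot μ p) :
    emultiplicity (hζ.toInteger - 1) (1 - μ) = 1 := by
  rw [← neg_sub μ 1, emultiplicity_neg, ← emultiplicity_eq_of_associated_right
    (hζ.toInteger_isPrimitiveRoot.associated_sub_one hμ)]
  simpa using emultiplicity_pow_self_of_prime hζ.zeta_sub_one_prime' 1

end IsPrimitiveRoot

theorem exists_intCast_eq_prod_prod_nthRootsFinset {K : Type*} [Field K] [NumberField K]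
    [IsGalois ℚ K] (n : ℕ) (g : 𝓞 K → 𝓞 K → 𝓞 K)
    (hg : ∀ (σ : 𝓞 K ≃ₐ[ℤ] 𝓞 K) x y, σ (g x y) = g (σ x) (σ y)) :
    ∃ N : ℤ, (N : 𝓞 K) = ∏ x ∈ nthRootsFinset n (1 : 𝓞 K), ∏ y ∈ nthRootsFinset n 1, g x y := by
  have := Algebra.isInvariant_of_isGalois' ℤ ℚ K (𝓞 K)
  obtain ⟨N, hN⟩ := Algebra.IsInvariant.isInvariant (A := ℤ) (G := 𝓞 K ≃ₐ[ℤ] 𝓞 K)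
    (∏ x ∈ nthRootsFinset n (1 : 𝓞 K), ∏ y ∈ nthRootsFinset n 1, g x y) fun σ ↦ by
      calc σ • ∏ x ∈ nthRootsFinset n 1, ∏ y ∈ nthRootsFinset n 1, g x y
          = ∏ x ∈ nthRootsFinset n 1, ∏ y ∈ nthRootsFinset n 1, g (σ x) (σ y) := by
            simp [AlgEquiv.smul_def, map_prod, hg]
        _ = ∏ x ∈ nthRootsFinset n 1, ∏ y ∈ nthRootsFinset n 1, g (σ x) y :=
            prod_congr rfl fun x _ ↦ prod_nthRootsFinset_comp_mulEquiv σ n (g (σ x))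
        _ = _ := prod_nthRootsFinset_comp_mulEquiv σ n fun x ↦ ∏ y ∈ nthRootsFinset n 1, g x y
  exact ⟨N, by simpa using hN⟩

theorem IsPrimitiveRoot.exists_ringHom_toInteger_eq {p : ℕ} [NeZero p] {K : Type*} [Field K]
    [CharZero K] [IsCyclotomicExtension {p} ℚ K] {ζ : K} (hζ : IsPrimitiveRoot ζ p)
    {C : Type*} [Field C] [CharZero C] {ω : C} (hω : IsPrimitiveRoot ω p) :
    ∃ f : 𝓞 K →+* C, f hζ.toInteger = ω := by
  let e := hζ.embeddingsEquivPrimitiveRoots C (cyclotomic.irreducible_rat (NeZero.pos p))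
  refine ⟨(e.symm ⟨ω, (mem_primitiveRoots (NeZero.pos p)).mpr hω⟩ : K →+* C).comp
    (algebraMap (𝓞 K) K), ?_⟩
  exact congrArg Subtype.val (e.apply_symm_apply _)

namespace GroupDet

def F {R : Type*} [CommRing R] (A₁ A₂ A₃ : ℤ) (p k : ℕ) (x y : R) : R :=
  A₁ * (p : R) ^ (1 + k) + A₂ * (1 - x) + A₃ * (1 - y) ^ 2

section Algebraic

variable (A₁ A₂ A₃ : ℤ) (p k : ℕ) {R : Type*} [CommRing R]

theorem map_F {S G : Type*} [CommRing S] [FunLike G R S] [RingHomClass G R S] (f : G) (x y : R) :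
    f (F A₁ A₂ A₃ p k x y) = F A₁ A₂ A₃ p k (f x) (f y) := by
  simp [F]

theorem F_one_one : F A₁ A₂ A₃ p k (1 : R) 1 = A₁ * (p : R) ^ (1 + k) := by
  simp [F]

theorem F_one_left (y : R) : F A₁ A₂ A₃ p k 1 y = F A₁ A₂ A₃ p k 1 1 + A₃ * (1 - y) ^ 2 := by
  simp [F]

theorem F_eq_F_one_left_add (x y : R) :
    F A₁ A₂ A₃ p k x y = F A₁ A₂ A₃ p k 1 y + A₂ * (1 - x) := by
  simp only [F]
  ring

end Algebraic

variable {p : ℕ} [hp : Fact p.Prime] {K : Type*} [Field K] [NumberField K]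
  [IsCyclotomicExtension {p} ℚ K] {ζ : K} (hζ : IsPrimitiveRoot ζ p) {A₁ A₂ A₃ : ℤ} {k : ℕ}
include hζ

theorem emultiplicity_F_one_one (h1 : ¬(p : ℤ) ∣ A₁) :
    emultiplicity (hζ.toInteger - 1) (F A₁ A₂ A₃ p k (1 : 𝓞 K) 1) = ((p - 1) * (1 + k) : ℕ) := by
  have hπ := hζ.zeta_sub_one_prime'
  rw [F_one_one, emultiplicity_mul hπ, hζ.emultiplicity_toInteger_sub_one_intCast_eq_zero h1,
    emultiplicity_pow hπ, hζ.emultiplicity_toInteger_sub_one_natCast, zero_add]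
  norm_cast
  ring

theorem two_lt_emultiplicity_F_one_one (h5 : 5 ≤ p) (h1 : ¬(p : ℤ) ∣ A₁) :
    2 < emultiplicity (hζ.toInteger - 1) (F A₁ A₂ A₃ p k (1 : 𝓞 K) 1) := by
  rw [emultiplicity_F_one_one hζ h1]
  norm_cast
  nlinarith [Nat.sub_add_cancel (by omega : 1 ≤ p)]

theorem emultiplicity_F_one_left (h5 : 5 ≤ p) (h1 : ¬(p : ℤ) ∣ A₁) (h3 : ¬(p : ℤ) ∣ A₃)
    {y : 𝓞 K} (hy : IsPrimitiveRoot y p) :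
    emultiplicity (hζ.toInteger - 1) (F A₁ A₂ A₃ p k 1 y) = 2 := by
  have hπ := hζ.zeta_sub_one_prime'
  have hA₃ : emultiplicity (hζ.toInteger - 1) (A₃ * (1 - y) ^ 2) = 2 := by
    rw [emultiplicity_mul hπ, hζ.emultiplicity_toInteger_sub_one_intCast_eq_zero h3,
      emultiplicity_pow hπ, hζ.emultiplicity_toInteger_sub_one_one_sub hy]
    norm_num
  rw [F_one_left, emultiplicity_add_of_gt (hA₃ ▸ two_lt_emultiplicity_F_one_one hζ h5 h1), hA₃]

theorem emultiplicity_F (h5 : 5 ≤ p) (h1 : ¬(p : ℤ) ∣ A₁) (h2 : ¬(p : ℤ) ∣ A₂)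
    (h3 : ¬(p : ℤ) ∣ A₃) {x y : 𝓞 K} (hx : IsPrimitiveRoot x p)
    (hy : y ∈ nthRootsFinset p (1 : 𝓞 K)) :
    emultiplicity (hζ.toInteger - 1) (F A₁ A₂ A₃ p k x y) = 1 := by
  have hπ := hζ.zeta_sub_one_prime'
  have hA₂ : emultiplicity (hζ.toInteger - 1) (A₂ * (1 - x)) = 1 := by
    rw [emultiplicity_mul hπ, hζ.emultiplicity_toInteger_sub_one_intCast_eq_zero h2,
      hζ.emultiplicity_toInteger_sub_one_one_sub hx, zero_add]
  have hrow : 1 < emultiplicity (hζ.toInteger - 1) (F A₁ A₂ A₃ p k 1 y) := by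
    rcases (mem_nthRootsFinset_iff_of_prime hp.out).mp hy with hy | rfl
    · rw [emultiplicity_F_one_left hζ h5 h1 h3 hy]
      norm_num
    · exact lt_trans (by norm_num) (two_lt_emultiplicity_F_one_one hζ h5 h1)
  rw [F_eq_F_one_left_add, emultiplicity_add_of_gt (by rwa [hA₂]), hA₂]

theorem emultiplicity_prod_prod_F (h5 : 5 ≤ p) (h1 : ¬(p : ℤ) ∣ A₁) (h2 : ¬(p : ℤ) ∣ A₂)
    (h3 : ¬(p : ℤ) ∣ A₃) :
    emultiplicity (hζ.toInteger - 1) (∏ x ∈ nthRootsFinset p (1 : 𝓞 K),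
      ∏ y ∈ nthRootsFinset p (1 : 𝓞 K), F A₁ A₂ A₃ p k x y) = ((p - 1) * (p + 3 + k) : ℕ) := by
  have hπ := hζ.zeta_sub_one_prime'
  have hη := hζ.toInteger_isPrimitiveRoot
  have hcard : #(primitiveRoots p (𝓞 K)) = p - 1 := by
    rw [hη.card_primitiveRoots, Nat.totient_prime hp.out]
  have hrow : emultiplicity (hζ.toInteger - 1)
      (∏ y ∈ nthRootsFinset p (1 : 𝓞 K), F A₁ A₂ A₃ p k 1 y) = ((p - 1) * (3 + k) : ℕ) := by
    rw [prod_nthRootsFinset_eq_mul_prod_primitiveRoots hp.out, emultiplicity_mul hπ,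
      emultiplicity_F_one_one hζ h1, emultiplicity_prod_of_forall_eq hπ fun y hy ↦
        emultiplicity_F_one_left hζ h5 h1 h3 ((mem_primitiveRoots hp.out.pos).mp hy), hcard]
    norm_cast
    ring
  have hcol : ∀ x ∈ primitiveRoots p (𝓞 K), emultiplicity (hζ.toInteger - 1)
      (∏ y ∈ nthRootsFinset p (1 : 𝓞 K), F A₁ A₂ A₃ p k x y) = p := fun x hx ↦ by
    rw [emultiplicity_prod_of_forall_eq hπ fun y hy ↦ emultiplicity_F hζ h5 h1 h2 h3
      ((mem_primitiveRoots hp.out.pos).mp hx) hy, hη.card_nthRootsFinset, mul_one]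
  rw [prod_nthRootsFinset_eq_mul_prod_primitiveRoots hp.out, emultiplicity_mul hπ, hrow,
    emultiplicity_prod_of_forall_eq hπ hcol, hcard]
  norm_cast
  ring

end GroupDet

/-- Let `p ≥ 5` be prime, `k ≥ 0`, and `A₁, A₂, A₃` integers not divisible by
`p`.  With `ω = e^(2πi/p)`, the integer
`N = Π_{i<p} Π_{j<p} (A₁ p^(1+k) + A₂(1-ω^i) + A₃(1-ω^j)²)`
is exactly divisible by `p^(p+3+k)`. -/
theorem stmt16 (p : ℕ) (hp : p.Prime) (h5 : 5 ≤ p) (k : ℕ) (A₁ A₂ A₃ : ℤ)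
    (h1 : ¬ (p : ℤ) ∣ A₁) (h2 : ¬ (p : ℤ) ∣ A₂) (h3 : ¬ (p : ℤ) ∣ A₃)
    (ω : ℂ) (hω : ω = Complex.exp (2 * Real.pi * Complex.I / p)) :
    ∃ N : ℤ,
      (N : ℂ) = ∏ i ∈ Finset.range p, ∏ j ∈ Finset.range p,
          ((A₁ : ℂ) * (p : ℂ) ^ (1 + k) + (A₂ : ℂ) * (1 - ω ^ i) +
            (A₃ : ℂ) * (1 - ω ^ j) ^ 2) ∧
      (p : ℤ) ^ (p + 3 + k) ∣ N ∧ ¬ (p : ℤ) ^ (p + 4 + k) ∣ N := by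
  have : Fact p.Prime := ⟨hp⟩
  have : IsCyclotomicExtension {p} ℚ (CyclotomicField p ℚ) :=
    CyclotomicField.isCyclotomicExtension p ℚ
  have := IsCyclotomicExtension.isGalois {p} ℚ (CyclotomicField p ℚ)
  have hζ := IsCyclotomicExtension.zeta_spec p ℚ (CyclotomicField p ℚ)
  obtain ⟨N, hN⟩ := exists_intCast_eq_prod_prod_nthRootsFinset (K := CyclotomicField p ℚ) p
    (GroupDet.F A₁ A₂ A₃ p k) fun σ ↦ GroupDet.map_F A₁ A₂ A₃ p k σ
  have hv := GroupDet.emultiplicity_prod_prod_F (k := k) hζ h5 h1 h2 h3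
  rw [← hN] at hv
  obtain ⟨f, hf⟩ := hζ.exists_ringHom_toInteger_eq
    (hω ▸ Complex.isPrimitiveRoot_exp p hp.ne_zero : IsPrimitiveRoot ω p)
  refine ⟨N, ?_, ?_, ?_⟩
  · rw [← map_intCast f, hN]
    simp only [← hζ.toInteger_isPrimitiveRoot.prod_range_pow, map_prod, GroupDet.map_F, map_pow,
      hf]
    rfl
  · rw [← hζ.toInteger_sub_one_pow_dvd_intCast_iff]
    exact pow_dvd_of_le_emultiplicity hv.ge
  · rw [← hζ.toInteger_sub_one_pow_dvd_intCast_iff]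
    refine not_pow_dvd_of_emultiplicity_lt ?_
    rw [hv]
    exact_mod_cast Nat.mul_lt_mul_of_pos_left (by omega) (by omega)
end
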